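/- (Volterra inequality) Let M be an n×n matrix with all entries positive, and let x(t), b(t) be continuous ℝ^n-valued functions on [0,T] satisfying the entrywise inequality x(t) ⪯ b(t) + ∫_0^t M·x(s) ds for all t ∈ [0,T]. Then x(T) ⪯ b(T) + ∫_0^T e^{M(T-t)}·M·b(t) dt entrywise. -/

import Mathlib

/-!
With `y t = ∫₀ᵗ M x`, the function `w t = e^{M(T-t)} y t` has derivative
`e^{M(T-t)} M (x t - y t) ⪯ e^{M(T-t)} M b t`, because `e^{M(T-t)}` and `M` have nonnegative
entries for `t ≤ T`. Integrating over `[0, T]` gives `y T = w T - w 0 ⪯ ∫₀ᵀ e^{M(T-t)} M b`,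
and `x T ⪯ b T + y T` by hypothesis.
-/

noncomputable section
open Real MeasureTheory Set

open NormedSpace

section Primitive

variable {E : Type*} [NormedAddCommGroup E] [NormedSpace ℝ E] {f : ℝ → E} {a b : ℝ}

theorem ContinuousOn.continuousOn_primitive (hf : ContinuousOn f (Icc a b)) (hab : a ≤ b) :
    ContinuousOn (fun u => ∫ s in a..u, f s) (Icc a b) := by
  rw [← uIcc_of_le hab] at hf ⊢
  exact intervalIntegral.continuousOn_primitive_interval hf.integrableOn_uIcc

theorem ContinuousOn.hasDerivAt_primitive [CompleteSpace E] (hf : ContinuousOn f (Icc a b))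
    {t : ℝ} (ht : t ∈ Ioo a b) : HasDerivAt (fun u => ∫ s in a..u, f s) (f t) t :=
  intervalIntegral.integral_hasDerivAt_right
    ((hf.mono (Icc_subset_Icc le_rfl ht.2.le)).intervalIntegrable_of_Icc ht.1.le)
    ((hf.mono Ioo_subset_Icc_self).stronglyMeasurableAtFilter isOpen_Ioo t ht)
    (hf.continuousAt (Icc_mem_nhds ht.1 ht.2))

end Primitive

theorem sub_le_integral_apply_of_hasDerivAt_of_le {ι : Type*} [Fintype ι] {a b : ℝ}
    {w w' φ : ℝ → ι → ℝ} (hab : a ≤ b) (hw : ContinuousOn w (Icc a b))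
    (hderiv : ∀ t ∈ Ioo a b, HasDerivAt w (w' t) t) (hφ : ContinuousOn φ (Icc a b))
    (hle : ∀ t ∈ Ioo a b, w' t ≤ φ t) (i : ι) :
    w b i - w a i ≤ ∫ t in a..b, φ t i :=
  intervalIntegral.sub_le_integral_of_hasDeriv_right_of_le hab
    ((continuous_apply i).comp_continuousOn hw)
    (fun t ht => (hasDerivAt_pi.1 (hderiv t ht) i).hasDerivWithinAt)
    ((continuous_apply i).comp_continuousOn hφ).integrableOn_Icc
    (fun t ht => hle t ht i)

theorem hasDerivAt_exp_sub_smul {𝔸 : Type*} [NormedRing 𝔸] [NormedAlgebra ℝ 𝔸] [CompleteSpace 𝔸]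
    (a : 𝔸) (T t : ℝ) :
    HasDerivAt (fun u : ℝ => exp ((T - u) • a)) (-(exp ((T - t) • a) * a)) t := by
  simpa [Function.comp_def] using
    (hasDerivAt_exp_smul_const a (T - t)).scomp t ((hasDerivAt_id t).const_sub T)

namespace Matrix

variable {m n : Type*} [Fintype n]

theorem _root_.ContinuousOn.matrix_mulVec {X R : Type*} [TopologicalSpace X]
    [TopologicalSpace R] [NonUnitalNonAssocSemiring R] [ContinuousAdd R] [ContinuousMul R]
    {A : X → Matrix m n R} {v : X → n → R} {s : Set X} (hA : ContinuousOn A s)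
    (hv : ContinuousOn v s) : ContinuousOn (fun x => A x *ᵥ v x) s :=
  continuousOn_iff_continuous_domRestrict.2 <|
    (continuousOn_iff_continuous_domRestrict.1 hA).matrix_mulVec
      (continuousOn_iff_continuous_domRestrict.1 hv)

theorem mulVec_mono_of_nonneg {R : Type*} [Semiring R] [PartialOrder R] [IsOrderedRing R]
    {A : Matrix m n R} (hA : ∀ i j, 0 ≤ A i j) {v w : n → R} (hvw : v ≤ w) :
    A *ᵥ v ≤ A *ᵥ w :=
  fun i => dotProduct_le_dotProduct_of_nonneg_left hvw (hA i)

section Normed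

attribute [local instance] Matrix.linftyOpNormedAddCommGroup Matrix.linftyOpNormedSpace
  Matrix.linftyOpNormedRing Matrix.linftyOpNormedAlgebra

theorem exp_apply_nonneg [DecidableEq n] {A : Matrix n n ℝ} (hA : ∀ i j, 0 ≤ A i j) (i j : n) :
    0 ≤ exp A i j :=
  (Pi.hasSum.1 (Pi.hasSum.1 (exp_series_hasSum_exp' (𝕂 := ℝ) A) i) j).nonneg fun k => by
    simpa only [smul_apply, smul_eq_mul] using
      mul_nonneg (by positivity) (pow_apply_nonneg hA k i j)

variable {𝕜 : Type*} [NontriviallyNormedField 𝕜] [CompleteSpace 𝕜] [Fintype m]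

def mulVecCLM : Matrix m n 𝕜 →L[𝕜] (n → 𝕜) →L[𝕜] m → 𝕜 :=
  LinearMap.toContinuousLinearMap
    (LinearMap.toContinuousLinearMap.toLinearMap ∘ₗ mulVecBilin 𝕜 𝕜)

theorem _root_.HasDerivAt.matrix_mulVec {A : 𝕜 → Matrix m n 𝕜} {v : 𝕜 → n → 𝕜}
    {A' : Matrix m n 𝕜} {v' : n → 𝕜} {t : 𝕜} (hA : HasDerivAt A A' t) (hv : HasDerivAt v v' t) :
    HasDerivAt (fun s => A s *ᵥ v s) (A' *ᵥ v t + A t *ᵥ v') t := by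
  rw [add_comm]
  exact mulVecCLM.hasDerivAt_of_bilinear (fun _ => hA) (fun _ => hv)

theorem integral_mulVec_le_integral_exp_mulVec [DecidableEq n] {M : Matrix n n ℝ}
    (hM : ∀ i j, 0 ≤ M i j) {T : ℝ} (hT : 0 ≤ T) {x b : ℝ → n → ℝ}
    (hx : ContinuousOn x (Icc 0 T)) (hb : ContinuousOn b (Icc 0 T))
    (hineq : ∀ t ∈ Icc 0 T, x t ≤ b t + fun i => ∫ s in 0..t, (M *ᵥ x s) i) (i : n) :
    ∫ s in 0..T, (M *ᵥ x s) i ≤ ∫ t in 0..T, (exp ((T - t) • M) *ᵥ (M *ᵥ b t)) i := by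
  set y : ℝ → n → ℝ := fun t i => ∫ s in 0..t, (M *ᵥ x s) i
  set E : ℝ → Matrix n n ℝ := fun t => exp ((T - t) • M)
  have hMx : ContinuousOn (fun s => M *ᵥ x s) (Icc 0 T) := continuousOn_const.matrix_mulVec hx
  have hy : ContinuousOn y (Icc 0 T) := continuousOn_pi.2 fun k =>
    ((continuous_apply k).comp_continuousOn hMx).continuousOn_primitive hT
  have hy' (t : ℝ) (ht : t ∈ Ioo 0 T) : HasDerivAt y (M *ᵥ x t) t := hasDerivAt_pi.2 fun k =>
    ((continuous_apply k).comp_continuousOn hMx).hasDerivAt_primitive ht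
  have hE (t : ℝ) : HasDerivAt E (-(E t * M)) t := hasDerivAt_exp_sub_smul M T t
  have hEc : Continuous E := continuous_iff_continuousAt.2 fun t => (hE t).continuousAt
  have hE_nonneg (t : ℝ) (ht : t ≤ T) : ∀ i j, 0 ≤ E t i j :=
    exp_apply_nonneg fun i j => mul_nonneg (sub_nonneg.2 ht) (hM i j)
  have hle (t : ℝ) (ht : t ∈ Ioo 0 T) :
      -(E t * M) *ᵥ y t + E t *ᵥ (M *ᵥ x t) ≤ E t *ᵥ (M *ᵥ b t) :=
    calc -(E t * M) *ᵥ y t + E t *ᵥ (M *ᵥ x t) = E t *ᵥ (M *ᵥ (x t - y t)) := by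
          rw [mulVec_sub, mulVec_sub, neg_mulVec, ← mulVec_mulVec]; abel
      _ ≤ E t *ᵥ (M *ᵥ b t) := mulVec_mono_of_nonneg (hE_nonneg t ht.2.le) <|
          mulVec_mono_of_nonneg hM (sub_le_iff_le_add.2 (hineq t (Ioo_subset_Icc_self ht)))
  have key := sub_le_integral_apply_of_hasDerivAt_of_le hT (w := fun t => E t *ᵥ y t)
    (φ := fun t => E t *ᵥ (M *ᵥ b t)) (hEc.continuousOn.matrix_mulVec hy)
    (fun t ht => (hE t).matrix_mulVec (hy' t ht))
    (hEc.continuousOn.matrix_mulVec (continuousOn_const.matrix_mulVec hb)) hle i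
  have hET : E T = 1 := by simp [E]
  have hy0 : y 0 = 0 := funext fun _ => intervalIntegral.integral_same
  simpa only [hET, hy0, one_mulVec, mulVec_zero, Pi.zero_apply, sub_zero] using key

end Normed

end Matrix

/-- Volterra inequality: if `x(t) ⪯ b(t) + ∫₀ᵗ M·x(s) ds` entrywise on `[0,T]`
with `M` entrywise positive, then `x(T) ⪯ b(T) + ∫₀ᵀ e^{M(T-t)}·M·b(t) dt` entrywise. -/
theorem volterra_inequality {n : ℕ} (M : Matrix (Fin n) (Fin n) ℝ)
    (hM : ∀ i j, 0 < M i j)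
    (T : ℝ) (hT : 0 ≤ T)
    (x b : ℝ → (Fin n → ℝ))
    (hx : ContinuousOn x (Icc 0 T))
    (hb : ContinuousOn b (Icc 0 T))
    (hineq : ∀ t ∈ Icc (0 : ℝ) T, ∀ i,
      x t i ≤ b t i + ∫ s in (0 : ℝ)..t, (M.mulVec (x s)) i) :
    ∀ i, x T i ≤ b T i
      + ∫ t in (0 : ℝ)..T, ((NormedSpace.exp ((T - t) • M)).mulVec (M.mulVec (b t))) i := by
  intro i
  have hprimitive := M.integral_mulVec_le_integral_exp_mulVec (fun i j => (hM i j).le) hT hx hb hineq i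
  linarith [hineq T ⟨hT, le_rfl⟩ i]
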